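/- arXiv:1511.02393 — 8 statements merged into one kernel-verified Lean document; each statement's English description precedes it below -/
import Mathlib

section
/- Let sa be a permutation of {1,...,n} sorting the suffixes of S into strictly increasing lexicographic order (i.e., S[sa[p]..n] < S[sa[q]..n] for all p < q), and let rank be its inverse. Then for any position i and any position j ≠ i, the length of the longest common prefix of S[i..n] and S[j..n] is at most the maximum of the lcp length of S[i..n] with the suffix of rank rank[i]−1 (taken to be 0 if rank[i] = 1) and the lcp length of S[i..n] with the suffix of rank rank[i]+1 (taken to be 0 if rank[i] = n). Consequently L_i equals this maximum over the two rank-adjacent suffixes. -/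
variable {α : Type*}

/-- `S[i'..i'+(j-i)] = S[i..j]` : the substring of `S` of length `j-i+1`
starting at `i'` equals the substring `S[i..j]`. -/
def SubstrEq (S : ℕ → α) (i i' j : ℕ) : Prop :=
  ∀ t ≤ j - i, S (i' + t) = S (i + t)

/-- `[i..j]` is a valid (nonempty) position interval of a string of length `n`. -/
def ValidSub (n i j : ℕ) : Prop := 1 ≤ i ∧ i ≤ j ∧ j ≤ n

/-- `S[i..j]` is a repeat: a valid substring occurring at some other start position. -/
def IsRepeat (S : ℕ → α) (n i j : ℕ) : Prop :=
  ValidSub n i j ∧ ∃ i', 1 ≤ i' ∧ i' ≠ i ∧ i' + (j - i) ≤ n ∧ SubstrEq S i i' j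

/-- `S[i..j]` is unique: a valid substring with no other occurrence. -/
def IsUniqueSub (S : ℕ → α) (n i j : ℕ) : Prop :=
  ValidSub n i j ∧ ¬ ∃ i', 1 ≤ i' ∧ i' ≠ i ∧ i' + (j - i) ≤ n ∧ SubstrEq S i i' j

/-- `S[k..j]` is the left-bounded longest repeat (LLR) starting at `k`. -/
def IsLLR (S : ℕ → α) (n k j : ℕ) : Prop :=
  IsRepeat S n k j ∧ (j = n ∨ IsUniqueSub S n k (j + 1))

/-- An LLR `S[k..j]` is useful: it is not a substring of another LLR. -/
def IsUsefulLLR (S : ℕ → α) (n k j : ℕ) : Prop :=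
  IsLLR S n k j ∧
    ¬ ∃ k' j', IsLLR S n k' j' ∧ (k', j') ≠ (k, j) ∧ k' ≤ k ∧ j ≤ j'

/-- `S[i..j]` is a longest repeat (LR) covering the position interval `[x..y]`. -/
def IsLR (S : ℕ → α) (n x y i j : ℕ) : Prop :=
  IsRepeat S n i j ∧ i ≤ x ∧ y ≤ j ∧
    ¬ ∃ i' j', IsRepeat S n i' j' ∧ i' ≤ x ∧ y ≤ j' ∧ j - i < j' - i'

/-- `ℓ` is the length of the longest common prefix of the suffixes
`S[i..n]` and `S[j..n]`. -/
def IsLcpLen (S : ℕ → α) (n i j ℓ : ℕ) : Prop :=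
  i + ℓ ≤ n + 1 ∧ j + ℓ ≤ n + 1 ∧ (∀ t < ℓ, S (i + t) = S (j + t)) ∧
    ¬ (i + ℓ ≤ n ∧ j + ℓ ≤ n ∧ S (i + ℓ) = S (j + ℓ))

/-- `L` is the maximum, over all positions `j ≠ i`, of the length of the longest
common prefix of the suffixes `S[i..n]` and `S[j..n]` (0 if there is no such `j`). -/
def IsMaxLcp (S : ℕ → α) (n i L : ℕ) : Prop :=
  (∀ j ℓ, 1 ≤ j → j ≤ n → j ≠ i → IsLcpLen S n i j ℓ → ℓ ≤ L) ∧
    (L = 0 ∨ ∃ j, 1 ≤ j ∧ j ≤ n ∧ j ≠ i ∧ IsLcpLen S n i j L)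

/-- `L i` is the length of the LLR starting at `i` (`0` when no LLR starts at `i`),
for every position `i` of the string. -/
def LlrLenFun (S : ℕ → α) (n : ℕ) (L : ℕ → ℕ) : Prop :=
  ∀ i, 1 ≤ i → i ≤ n →
    (L i = 0 ∧ ¬ ∃ j, IsLLR S n i j) ∨ (0 < L i ∧ IsLLR S n i (i + L i - 1))

/-- The suffix `S[i..n]` is lexicographically smaller than the suffix `S[j..n]`. -/
def SuffixLt [LinearOrder α] (S : ℕ → α) (n i j : ℕ) : Prop :=
  ∃ ℓ, (∀ t < ℓ, S (i + t) = S (j + t)) ∧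
    ((i + ℓ = n + 1 ∧ j + ℓ ≤ n) ∨ (i + ℓ ≤ n ∧ j + ℓ ≤ n ∧ S (i + ℓ) < S (j + ℓ)))

lemma suffixLt_irrefl [LinearOrder α] (S : ℕ → α) (n i : ℕ) : ¬ SuffixLt S n i i := by
  rintro ⟨ℓ, _, (⟨h1, h2⟩ | ⟨_, _, h3⟩)⟩
  · omega
  · exact lt_irrefl _ h3

lemma lcpLen_unique {S : ℕ → α} {n i j ℓ ℓ' : ℕ}
    (h : IsLcpLen S n i j ℓ) (h' : IsLcpLen S n i j ℓ') : ℓ = ℓ' := by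
  obtain ⟨h1, h2, h3, h4⟩ := h
  obtain ⟨h1', h2', h3', h4'⟩ := h'
  rcases lt_trichotomy ℓ ℓ' with hlt | heq | hlt
  · exact absurd ⟨by omega, by omega, h3' ℓ hlt⟩ h4
  · exact heq
  · exact absurd ⟨by omega, by omega, h3 ℓ' hlt⟩ h4'

lemma le_of_common_prefix {S : ℕ → α} {n i j ℓ1 ℓ : ℕ}
    (h : IsLcpLen S n i j ℓ1) (hagr : ∀ t < ℓ, S (i + t) = S (j + t))
    (hi : i + ℓ ≤ n + 1) (hj : j + ℓ ≤ n + 1) : ℓ ≤ ℓ1 := by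
  by_contra hc
  push_neg at hc
  exact h.2.2.2 ⟨by omega, by omega, hagr ℓ1 hc⟩

lemma suffix_between [LinearOrder α] {S : ℕ → α} {n a b c ℓ : ℕ}
    (hab : SuffixLt S n a b) (hbc : SuffixLt S n b c)
    (hagr : ∀ t < ℓ, S (a + t) = S (c + t)) (ha : a + ℓ ≤ n + 1) :
    (∀ t < ℓ, S (b + t) = S (a + t)) ∧ b + ℓ ≤ n := by
  obtain ⟨ℓa, ha1, ha2⟩ := hab
  obtain ⟨ℓb, hb1, hb2⟩ := hbc
  by_cases hcase : ℓ ≤ ℓa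
  · refine ⟨fun t ht => (ha1 t (lt_of_lt_of_le ht hcase)).symm, ?_⟩
    rcases ha2 with ⟨_, hbn⟩ | ⟨_, hbn, _⟩ <;> omega
  · exfalso
    push_neg at hcase
    have hA : S (a + ℓa) = S (c + ℓa) := hagr ℓa hcase
    rcases ha2 with ⟨h1, _⟩ | ⟨han, hbn, hlt1⟩
    · omega
    rcases lt_trichotomy ℓa ℓb with h | h | h
    · have := hb1 ℓa h
      rw [this, ← hA] at hlt1
      exact lt_irrefl _ hlt1
    · subst h
      rcases hb2 with ⟨h1, _⟩ | ⟨_, _, hlt2⟩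
      · omega
      · rw [← hA] at hlt2
        exact lt_irrefl _ (hlt1.trans hlt2)
    · have hE : S (a + ℓb) = S (b + ℓb) := ha1 ℓb h
      rcases hb2 with ⟨h1, _⟩ | ⟨_, _, hlt2⟩
      · omega
      · have := hagr ℓb (by omega)
        rw [← this, ← hE] at hlt2
        exact lt_irrefl _ hlt2

theorem stmt1 [Fintype α] [LinearOrder α] (S : ℕ → α) (n : ℕ)
    (sa rank : ℕ → ℕ)
    (hsa : ∀ p, 1 ≤ p → p ≤ n → 1 ≤ sa p ∧ sa p ≤ n)
    (hsorted : ∀ p q, 1 ≤ p → p < q → q ≤ n → SuffixLt S n (sa p) (sa q))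
    (hrank : ∀ i, 1 ≤ i → i ≤ n → 1 ≤ rank i ∧ rank i ≤ n ∧ sa (rank i) = i)
    (i : ℕ) (hi : 1 ≤ i) (hin : i ≤ n)
    (ℓ1 ℓ2 : ℕ)
    (hℓ1 : (rank i = 1 ∧ ℓ1 = 0) ∨
      (1 < rank i ∧ IsLcpLen S n i (sa (rank i - 1)) ℓ1))
    (hℓ2 : (rank i = n ∧ ℓ2 = 0) ∨
      (rank i < n ∧ IsLcpLen S n i (sa (rank i + 1)) ℓ2)) :
    (∀ j ℓ, 1 ≤ j → j ≤ n → j ≠ i → IsLcpLen S n i j ℓ → ℓ ≤ max ℓ1 ℓ2) ∧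
    IsMaxLcp S n i (max ℓ1 ℓ2) := by
  obtain ⟨hp1, hpn, hspi⟩ := hrank i hi hin
  have key : ∀ j ℓ, 1 ≤ j → j ≤ n → j ≠ i → IsLcpLen S n i j ℓ → ℓ ≤ max ℓ1 ℓ2 := by
    intro j ℓ hj hjn hji hlcp
    obtain ⟨hq1, hqn, hsqj⟩ := hrank j hj hjn
    have hpq : rank j ≠ rank i := by
      intro h; apply hji; rw [← hsqj, h, hspi]
    obtain ⟨hiℓ, hjℓ, hagr, hmax⟩ := hlcp
    rcases lt_or_gt_of_ne hpq with hlt | hgt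
    · -- rank j < rank i : use ℓ1
      rcases hℓ1 with ⟨h1, _⟩ | ⟨h2, hL1⟩
      · omega
      by_cases heq : rank j = rank i - 1
      · have : j = sa (rank i - 1) := by rw [← heq, hsqj]
        rw [this] at hagr hjℓ hmax
        have := lcpLen_unique ⟨hiℓ, hjℓ, hagr, hmax⟩ hL1
        omega
      · have hab : SuffixLt S n j (sa (rank i - 1)) := by
          have := hsorted (rank j) (rank i - 1) hq1 (by omega) (by omega)
          rwa [hsqj] at this
        have hbc : SuffixLt S n (sa (rank i - 1)) i := by
          have := hsorted (rank i - 1) (rank i) (by omega) (by omega) hpn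
          rwa [hspi] at this
        obtain ⟨hbagr, hbn⟩ := suffix_between hab hbc
          (fun t ht => (hagr t ht).symm) hjℓ
        have hfin : ∀ t < ℓ, S (i + t) = S (sa (rank i - 1) + t) := by
          intro t ht
          rw [hagr t ht, ← hbagr t ht]
        have := le_of_common_prefix hL1 hfin hiℓ (by omega)
        omega
    · -- rank i < rank j : use ℓ2
      rcases hℓ2 with ⟨h1, _⟩ | ⟨h2, hL2⟩
      · omega
      by_cases heq : rank j = rank i + 1
      · have : j = sa (rank i + 1) := by rw [← heq, hsqj]
        rw [this] at hagr hjℓ hmax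
        have := lcpLen_unique ⟨hiℓ, hjℓ, hagr, hmax⟩ hL2
        omega
      · have hab : SuffixLt S n i (sa (rank i + 1)) := by
          have := hsorted (rank i) (rank i + 1) hp1 (by omega) (by omega)
          rwa [hspi] at this
        have hbc : SuffixLt S n (sa (rank i + 1)) j := by
          have := hsorted (rank i + 1) (rank j) (by omega) (by omega) hqn
          rwa [hsqj] at this
        obtain ⟨hbagr, hbn⟩ := suffix_between hab hbc hagr hiℓ
        have hfin : ∀ t < ℓ, S (i + t) = S (sa (rank i + 1) + t) := by
          intro t ht
          exact (hbagr t ht).symm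
        have := le_of_common_prefix hL2 hfin hiℓ (by omega)
        omega
  refine ⟨key, key, ?_⟩
  rcases Nat.eq_zero_or_pos (max ℓ1 ℓ2) with h0 | hpos
  · exact Or.inl h0
  · right
    by_cases h12 : ℓ2 ≤ ℓ1
    · rw [max_eq_left h12] at hpos ⊢
      rcases hℓ1 with ⟨_, h⟩ | ⟨h2, hL1⟩
      · omega
      refine ⟨sa (rank i - 1), (hsa _ (by omega) (by omega)).1,
        (hsa _ (by omega) (by omega)).2, ?_, hL1⟩
      intro h
      have := hsorted (rank i - 1) (rank i) (by omega) (by omega) hpn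
      rw [hspi, h] at this
      exact suffixLt_irrefl S n i this
    · rw [max_eq_right (by omega)] at hpos ⊢
      rcases hℓ2 with ⟨_, h⟩ | ⟨h2, hL2⟩
      · omega
      refine ⟨sa (rank i + 1), (hsa _ (by omega) (by omega)).1,
        (hsa _ (by omega) (by omega)).2, ?_, hL2⟩
      intro h
      have := hsorted (rank i) (rank i + 1) hp1 (by omega) (by omega)
      rw [hspi, h] at this
      exact suffixLt_irrefl S n i this
end

section
/- For every position i with 1 ≤ i ≤ n−1, L_i ≤ L_{i+1} + 1. Equivalently, the length of the left-bounded longest repeat starting at i is at most one more than the length of the left-bounded longest repeat starting at i+1 (where the length is taken to be 0 when the LLR does not exist). -/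
variable {α : Type*}

/-- Truncating a repeat gives a repeat. -/
lemma IsRepeat.trunc {S : ℕ → α} {n k j j' : ℕ} (h : IsRepeat S n k j)
    (h1 : k ≤ j') (h2 : j' ≤ j) : IsRepeat S n k j' := by
  obtain ⟨⟨hk, _, hjn⟩, i', hi'1, hi'ne, hi'n, hsub⟩ := h
  refine ⟨⟨hk, h1, le_trans h2 hjn⟩, i', hi'1, hi'ne, ?_, fun t ht => hsub t (by omega)⟩
  omega

/-- Any repeat extends to an LLR at the same start. -/
lemma repeat_to_llr {S : ℕ → α} {n k j : ℕ} (h : IsRepeat S n k j) :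
    ∃ j', IsLLR S n k j' := by
  classical
  obtain ⟨m, hm⟩ : ∃ m, n - j ≤ m := ⟨n - j, le_rfl⟩
  induction m generalizing j with
  | zero =>
    have hjn : j = n := by have := h.1.2.2; omega
    exact ⟨j, h, Or.inl hjn⟩
  | succ m ih =>
    by_cases hjn : j = n
    · exact ⟨j, h, Or.inl hjn⟩
    · have hjn' : j + 1 ≤ n := by have := h.1.2.2; omega
      have hkj : k ≤ j := h.1.2.1
      by_cases hrep : IsRepeat S n k (j + 1)
      · exact ih hrep (by omega)
      · refine ⟨j, h, Or.inr ⟨⟨h.1.1, by omega, hjn'⟩, fun hex => ?_⟩⟩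
        exact hrep ⟨⟨h.1.1, by omega, hjn'⟩, hex⟩

theorem stmt2 [Fintype α] (S : ℕ → α) (n : ℕ) (L : ℕ → ℕ)
    (hL : LlrLenFun S n L)
    (i : ℕ) (hi : 1 ≤ i) (hin : i ≤ n - 1) :
    L i ≤ L (i + 1) + 1 := by
  have hn2 : 2 ≤ n := by omega
  rcases hL i hi (by omega) with ⟨h0, _⟩ | ⟨hpos, hllr⟩
  · omega
  by_cases hLi2 : L i ≤ 1
  · omega
  push_neg at hLi2
  -- repeat S[i .. i+L i-1]
  obtain ⟨hrep, _⟩ := hllr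
  have hend : i + L i - 1 ≤ n := hrep.1.2.2
  -- shift to a repeat starting at i+1
  obtain ⟨⟨hk1, _, _⟩, i', hi'1, hi'ne, hi'n, hsub⟩ := hrep
  have hrep1 : IsRepeat S n (i + 1) (i + L i - 1) := by
    refine ⟨⟨by omega, by omega, hend⟩, i' + 1, by omega, by omega, by omega, fun t ht => ?_⟩
    have := hsub (t + 1) (by omega)
    simpa [Nat.add_assoc, Nat.add_comm, Nat.add_left_comm] using this
  obtain ⟨j', hllr'⟩ := repeat_to_llr hrep1
  rcases hL (i + 1) (by omega) (by omega) with ⟨_, hno⟩ | ⟨hpos', hllr1⟩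
  · exact absurd ⟨j', hllr'⟩ hno
  -- LLR at i+1 ends at e = i + L (i+1)
  set e := i + 1 + L (i + 1) - 1 with he
  obtain ⟨hrep', hdisj⟩ := hllr1
  by_contra hcon
  push_neg at hcon
  rcases hdisj with hen | ⟨_, huniq⟩
  · have := hrep1.1.2.2
    omega
  · -- S[i+1 .. e+1] is a repeat, contradiction with uniqueness
    have htr : IsRepeat S n (i + 1) (e + 1) := hrep1.trunc (by omega) (by omega)
    exact huniq htr.2
end

section
/- Any longest repeat covering a position interval is a useful left-bounded longest repeat: if S[i..j] is a longest repeat covering the interval [x..y] (1 ≤ x ≤ y ≤ n), then (a) S[i..j] is an LLR, i.e., either j = n or S[i..j+1] is unique, and (b) S[i..j] is useful, i.e., there is no LLR S[i'..j'] with (i',j') ≠ (i,j), i' ≤ i and j ≤ j'. -/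
variable {α : Type*}

theorem stmt6 [Fintype α] (S : ℕ → α) (n x y i j : ℕ)
    (hx : 1 ≤ x) (hxy : x ≤ y) (hyn : y ≤ n)
    (hlr : IsLR S n x y i j) :
    (j = n ∨ IsUniqueSub S n i (j + 1)) ∧
    ¬ ∃ i' j', IsLLR S n i' j' ∧ (i', j') ≠ (i, j) ∧ i' ≤ i ∧ j ≤ j' := by
  obtain ⟨⟨⟨hi1, hij, hjn⟩, hocc⟩, hix, hyj, hmax⟩ := hlr
  constructor
  · rcases eq_or_lt_of_le hjn with h | h
    · exact Or.inl h
    · refine Or.inr ⟨⟨hi1, by omega, by omega⟩, ?_⟩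
      rintro ⟨i'', h1, h2, h3, h4⟩
      exact hmax ⟨i, j + 1, ⟨⟨hi1, by omega, by omega⟩, i'', h1, h2, h3, h4⟩,
        hix, by omega, by omega⟩
  · rintro ⟨i', j', ⟨⟨⟨h1, h2, h3⟩, hocc'⟩, _⟩, hne, hii, hjj⟩
    refine hmax ⟨i', j', ⟨⟨h1, h2, h3⟩, hocc'⟩, le_trans hii hix,
      le_trans hyj hjj, ?_⟩
    have : i' ≠ i ∨ j' ≠ j := by
      by_contra h
      push_neg at h
      exact hne (by simp [h.1, h.2])
    omega
end

section
/- For any positions i, j, x, y with 1 ≤ i < j ≤ x ≤ y ≤ n: if LLR_j does not exist, or exists but does not cover the interval [x..y], then LLR_i does not exist or does not cover [x..y]. Equivalently, if some repeat starting at position i covers [x..y], then LLR_j exists and covers [x..y]. -/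
variable {α : Type*}

theorem stmt7 [Fintype α] (S : ℕ → α) (n i j x y : ℕ)
    (hi : 1 ≤ i) (hij : i < j) (hjx : j ≤ x) (hxy : x ≤ y) (hyn : y ≤ n)
    (hcov : ∃ k, IsRepeat S n i k ∧ i ≤ x ∧ y ≤ k) :
    ∃ m, IsLLR S n j m ∧ j ≤ x ∧ y ≤ m := by

  classical
  obtain ⟨k, ⟨⟨h1i, hik, hkn⟩, i', hi'1, hi'ne, hi'le, hsub⟩, hix, hyk⟩ := hcov
  have hjk : j ≤ k := le_trans (le_trans hjx hxy) hyk
  -- S[j..k] is a repeat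
  have hrep : IsRepeat S n j k := by
    refine ⟨⟨le_of_lt (lt_of_le_of_lt hi hij), hjk, hkn⟩,
      i' + (j - i), le_trans hi'1 (Nat.le_add_right _ _), ?_, ?_, ?_⟩
    · intro h
      apply hi'ne
      have : i + (j - i) = j := by omega
      omega
    · omega
    · intro t ht
      have h1 : i' + (j - i) + t = i' + ((j - i) + t) := by omega
      have h2 : i + ((j - i) + t) = j + t := by omega
      rw [h1, hsub ((j - i) + t) (by omega), h2]
  set P : ℕ → Prop := fun m => IsRepeat S n j m with hP
  set m := Nat.findGreatest P n with hm
  have hkm : k ≤ m := Nat.le_findGreatest hkn hrep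
  have hmn : m ≤ n := Nat.findGreatest_le n
  have hPm : P m := Nat.findGreatest_spec (m := k) (by omega) hrep
  refine ⟨m, ⟨hPm, ?_⟩, hjx, by omega⟩
  rcases eq_or_lt_of_le hmn with h | h
  · exact Or.inl h
  · right
    refine ⟨⟨le_of_lt (lt_of_le_of_lt hi hij), by omega, by omega⟩, ?_⟩
    rintro ⟨i'', hi''1, hi''ne, hi''le, hsub'⟩
    exact Nat.findGreatest_is_greatest (lt_add_one m) (by omega)
      ⟨⟨le_of_lt (lt_of_le_of_lt hi hij), by omega, by omega⟩,
        i'', hi''1, hi''ne, hi''le, hsub'⟩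
end

section
/- Let 1 ≤ x ≤ y ≤ n. If a longest repeat covering [x..y] exists, then the length of LR_x^y equals max{ L_i : 1 ≤ i ≤ x and i + L_i − 1 ≥ y }, and the maximizing positions i are exactly the start positions of the longest repeats covering [x..y]; moreover, LR_x^y does not exist exactly when no i ≤ x satisfies L_i > 0 and i + L_i − 1 ≥ y. -/
variable {α : Type*}

lemma repeat_prefix {S : ℕ → α} {n i j j' : ℕ} (h : IsRepeat S n i j)
    (h1 : i ≤ j') (h2 : j' ≤ j) : IsRepeat S n i j' := by
  obtain ⟨⟨hi, hij, hjn⟩, i', hi', hne, hbound, heq⟩ := h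
  exact ⟨⟨hi, h1, le_trans h2 hjn⟩, i', hi', hne, by omega,
    fun t ht => heq t (by omega)⟩

lemma exists_llr {S : ℕ → α} {n i j : ℕ} (h : IsRepeat S n i j) :
    ∃ m, IsLLR S n i m := by
  classical
  set M := Nat.findGreatest (fun m => IsRepeat S n i m) n with hM
  obtain ⟨⟨hi1, hij, hjn⟩, -⟩ := id h
  have hPM : IsRepeat S n i M := Nat.findGreatest_spec hjn h
  have hle : j ≤ M := Nat.le_findGreatest hjn h
  refine ⟨M, hPM, ?_⟩
  by_cases hMn : M = n
  · exact Or.inl hMn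
  · have hMlt : M < n := lt_of_le_of_ne (Nat.findGreatest_le n) hMn
    refine Or.inr ⟨⟨hi1, by omega, by omega⟩, ?_⟩
    rintro ⟨i', h1, h2, h3, h4⟩
    exact Nat.findGreatest_is_greatest (Nat.lt_succ_self M) (by omega)
      ⟨⟨hi1, by omega, by omega⟩, i', h1, h2, h3, h4⟩

lemma le_llr {S : ℕ → α} {n i j m : ℕ} (hrep : IsRepeat S n i j)
    (hllr : IsLLR S n i m) : j ≤ m := by
  by_contra hjm
  push_neg at hjm
  have hjn : j ≤ n := hrep.1.2.2
  have hrep' : IsRepeat S n i (m + 1) :=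
    repeat_prefix hrep (le_trans hllr.1.1.2.1 (Nat.le_succ m)) (by omega)
  rcases hllr.2 with h | h
  · omega
  · exact h.2 hrep'.2

/-- If a repeat starts at `i`, then `L i > 0` and the LLR at `i` bounds it. -/
lemma llr_of_repeat {S : ℕ → α} {n : ℕ} {L : ℕ → ℕ} (hL : LlrLenFun S n L)
    {i j : ℕ} (hrep : IsRepeat S n i j) :
    0 < L i ∧ IsLLR S n i (i + L i - 1) ∧ j ≤ i + L i - 1 := by
  obtain ⟨hi1, hij, hjn⟩ := hrep.1
  rcases hL i hi1 (le_trans hij hjn) with ⟨-, hno⟩ | ⟨hpos, hllr⟩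
  · exact absurd (exists_llr hrep) hno
  · exact ⟨hpos, hllr, le_llr hrep hllr⟩

theorem stmt8 [Fintype α] (S : ℕ → α) (n x y : ℕ) (L : ℕ → ℕ)
    (hx : 1 ≤ x) (hxy : x ≤ y) (hyn : y ≤ n)
    (hL : LlrLenFun S n L) :
    (∀ a b, IsLR S n x y a b →
      (∀ i, 1 ≤ i → i ≤ x → 0 < L i → y ≤ i + L i - 1 → L i ≤ b - a + 1) ∧
      (∀ i, 1 ≤ i → i ≤ x →
        ((0 < L i ∧ y ≤ i + L i - 1 ∧ L i = b - a + 1) ↔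
          ∃ j, IsLR S n x y i j))) ∧
    ((∃ a b, IsLR S n x y a b) ↔
      ∃ i, 1 ≤ i ∧ i ≤ x ∧ 0 < L i ∧ y ≤ i + L i - 1) := by
  classical
  constructor
  · intro a b hab
    obtain ⟨hrepab, hax, hyb, hmax⟩ := hab
    obtain ⟨ha1, hab', hbn⟩ := hrepab.1
    have key : ∀ i, 1 ≤ i → i ≤ x → 0 < L i → y ≤ i + L i - 1 → L i ≤ b - a + 1 := by
      intro i hi1 hix hpos hy
      rcases hL i hi1 (by omega) with ⟨h0, -⟩ | ⟨-, hllr⟩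
      · omega
      · have hrep : IsRepeat S n i (i + L i - 1) := hllr.1
        have hij : i ≤ i + L i - 1 := hrep.1.2.1
        by_contra hcon
        exact hmax ⟨i, i + L i - 1, hrep, hix, hy, by omega⟩
    refine ⟨key, fun i hi1 hix => ⟨?_, ?_⟩⟩
    · rintro ⟨hpos, hy, heq⟩
      rcases hL i hi1 (by omega) with ⟨h0, -⟩ | ⟨-, hllr⟩
      · omega
      · have hrep : IsRepeat S n i (i + L i - 1) := hllr.1
        refine ⟨i + L i - 1, hrep, hix, hy, ?_⟩
        rintro ⟨i', j', hrep', hix', hy', hlt⟩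
        have hi'j' : i' ≤ j' := hrep'.1.2.1
        exact hmax ⟨i', j', hrep', hix', hy', by omega⟩
    · rintro ⟨j, hrepij, hix', hyj, hmaxi⟩
      obtain ⟨hpos, hllr, hjle⟩ := llr_of_repeat hL hrepij
      have hij : i ≤ j := hrepij.1.2.1
      -- b - a ≤ j - i from maximality of (i,j), applied to repeat (a,b)
      have h1 : ¬ (j - i < b - a) := fun hc => hmaxi ⟨a, b, hrepab, hax, hyb, hc⟩
      -- L i - 1 ≤ b - a from maximality of (a,b), applied to LLR repeat
      have h2 : ¬ (b - a < (i + L i - 1) - i) := fun hc =>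
        hmax ⟨i, i + L i - 1, hllr.1, hix, by omega, hc⟩
      exact ⟨hpos, by omega, by omega⟩
  · constructor
    · rintro ⟨a, b, hrepab, hax, hyb, -⟩
      obtain ⟨ha1, hab', hbn⟩ := hrepab.1
      obtain ⟨hpos, hllr, hble⟩ := llr_of_repeat hL hrepab
      exact ⟨a, ha1, hax, hpos, by omega⟩
    · rintro ⟨i, hi1, hix, hpos, hy⟩
      rcases hL i hi1 (by omega) with ⟨h0, -⟩ | ⟨-, hllr⟩
      · omega
      · have hrep : IsRepeat S n i (i + L i - 1) := hllr.1
        have hij : i ≤ i + L i - 1 := hrep.1.2.1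
        set P : ℕ → Prop := fun d => ∃ a b, IsRepeat S n a b ∧ a ≤ x ∧ y ≤ b ∧ b - a = d
          with hP
        have hP0 : P (L i - 1) := ⟨i, i + L i - 1, hrep, hix, hy, by omega⟩
        have hPle : L i - 1 ≤ n := by have := hrep.1.2.2; omega
        obtain ⟨a, b, hrepab, hax, hyb, hd⟩ :=
          Nat.findGreatest_spec (P := P) hPle hP0
        refine ⟨a, b, hrepab, hax, hyb, ?_⟩
        rintro ⟨i', j', hrep', hix', hy', hlt⟩
        have hj'n : j' ≤ n := hrep'.1.2.2
        exact Nat.findGreatest_is_greatest (P := P) (n := n) (k := j' - i')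
          (by omega) (by omega) ⟨i', j', hrep', hix', hy', rfl⟩
end

section
/- For i ≥ 2 such that LLR_i exists (L_i > 0): LLR_i is useless (i.e., a substring of another LLR) if and only if L_i = L_{i−1} − 1 (in particular LLR_{i−1} exists and LLR_i is then a proper suffix of LLR_{i−1}). Consequently, LLR_i is useful if and only if L_i > 0 and L_i ≥ L_{i−1} (where for i = 1, LLR_1 is useful whenever it exists). -/
variable {α : Type*}

lemma sub_repeat (S : ℕ → α) (n a b c d : ℕ)
    (h : IsRepeat S n a b) (hac : a ≤ c) (hcd : c ≤ d) (hdb : d ≤ b) :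
    IsRepeat S n c d := by
  obtain ⟨⟨h1, hab, hbn⟩, i', hi1, hne, hib, heq⟩ := h
  refine ⟨⟨le_trans h1 hac, hcd, le_trans hdb hbn⟩, i' + (c - a),
    le_trans hi1 (Nat.le_add_right _ _), by omega, by omega, ?_⟩
  intro t ht
  have h1' : c - a + t ≤ b - a := by omega
  have hq := heq (c - a + t) h1'
  have e1 : i' + (c - a) + t = i' + (c - a + t) := by omega
  have e2 : c + t = a + (c - a + t) := by omega
  rw [e1, e2]; exact hq

lemma llr_maxend (S : ℕ → α) (n k e j : ℕ)
    (h : IsLLR S n k e) (hr : IsRepeat S n k j) : j ≤ e := by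
  obtain ⟨hrep, hcase⟩ := h
  rcases hcase with he | huniq
  · exact he ▸ hr.1.2.2
  · by_contra hlt
    push_neg at hlt
    have hke : k ≤ e := hrep.1.2.1
    exact huniq.2 (sub_repeat S n k j k (e+1) hr le_rfl (by omega) (by omega)).2

lemma repeat_llr (S : ℕ → α) (n k : ℕ) :
    ∀ m j, n - j = m → IsRepeat S n k j → ∃ e, IsLLR S n k e := by
  intro m
  induction m using Nat.strong_induction_on with
  | _ m ih =>
    intro j hm h
    obtain ⟨hk1, hkj, hjn⟩ := h.1
    by_cases hjn' : j = n
    · exact ⟨j, h, Or.inl hjn'⟩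
    · by_cases hrep : IsRepeat S n k (j+1)
      · exact ih (n - (j+1)) (by omega) (j+1) rfl hrep
      · refine ⟨j, h, Or.inr ⟨⟨hk1, by omega, by omega⟩, fun hx => hrep ⟨⟨hk1, by omega, by omega⟩, hx⟩⟩⟩

theorem stmt9 [Fintype α] (S : ℕ → α) (n : ℕ) (L : ℕ → ℕ)
    (hL : LlrLenFun S n L)
    (i : ℕ) (h2 : 2 ≤ i) (hin : i ≤ n) (hLi : 0 < L i) :
    ((∃ k' j', IsLLR S n k' j' ∧ (k', j') ≠ (i, i + L i - 1) ∧
        k' ≤ i ∧ i + L i - 1 ≤ j') ↔ L (i - 1) = L i + 1) ∧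
    (IsUsefulLLR S n i (i + L i - 1) ↔ L (i - 1) ≤ L i) ∧
    (∀ j, IsLLR S n 1 j → IsUsefulLLR S n 1 j) := by

  have hLLRi : IsLLR S n i (i + L i - 1) := by
    rcases hL i (by omega) hin with ⟨h0, _⟩ | ⟨_, h⟩
    · omega
    · exact h
  have hi1n : i - 1 ≤ n := by omega
  have hi11 : 1 ≤ i - 1 := by omega
  -- upper bound : L (i-1) ≤ L i + 1
  have hub : L (i - 1) ≤ L i + 1 := by
    by_cases hs : L (i - 1) ≤ 1
    · omega
    · rcases hL (i-1) hi11 hi1n with ⟨h0, _⟩ | ⟨hpos, hllr1⟩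
      · omega
      · have hr : IsRepeat S n i (i - 1 + L (i-1) - 1) :=
          sub_repeat S n (i-1) (i - 1 + L (i-1) - 1) i (i - 1 + L (i-1) - 1)
            hllr1.1 (by omega) (by omega) le_rfl
        have := llr_maxend S n i (i + L i - 1) (i - 1 + L (i-1) - 1) hLLRi hr
        omega
  have part1 : (∃ k' j', IsLLR S n k' j' ∧ (k', j') ≠ (i, i + L i - 1) ∧
      k' ≤ i ∧ i + L i - 1 ≤ j') ↔ L (i - 1) = L i + 1 := by
    constructor
    · rintro ⟨k', j', hllr', hne, hk'i, hje⟩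
      have hj'n : j' ≤ n := hllr'.1.1.2.2
      have hk'1 : 1 ≤ k' := hllr'.1.1.1
      have hk'lt : k' < i := by
        rcases Nat.lt_or_ge k' i with h | h
        · exact h
        · exfalso
          have hki : k' = i := by omega
          subst hki
          have := llr_maxend S n k' (k' + L k' - 1) j' hLLRi hllr'.1
          exact hne (by rw [Prod.mk.injEq]; omega)
      have hrep1 : IsRepeat S n (i-1) j' :=
        sub_repeat S n k' j' (i-1) j' hllr'.1 (by omega) (by omega) le_rfl
      rcases hL (i-1) hi11 hi1n with ⟨h0, hno⟩ | ⟨hpos, hllr1⟩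
      · exact absurd (repeat_llr S n (i-1) (n - j') j' rfl hrep1) hno
      · have := llr_maxend S n (i-1) (i - 1 + L (i-1) - 1) j' hllr1 hrep1
        omega
    · intro hE
      rcases hL (i-1) hi11 hi1n with ⟨h0, _⟩ | ⟨hpos, hllr1⟩
      · omega
      · refine ⟨i - 1, i - 1 + L (i-1) - 1, hllr1, ?_, by omega, by omega⟩
        intro h; rw [Prod.mk.injEq] at h; omega
  refine ⟨part1, ?_, ?_⟩
  · constructor
    · rintro ⟨_, hnot⟩
      by_contra hgt
      exact hnot (part1.mpr (by omega))
    · intro hle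
      exact ⟨hLLRi, fun hx => by have := part1.mp hx; omega⟩
  · intro j hj
    refine ⟨hj, ?_⟩
    rintro ⟨k', j', hllr', hne, hk1, hjj'⟩
    have hk'1 : 1 ≤ k' := hllr'.1.1.1
    have hk : k' = 1 := by omega
    subst hk
    have := llr_maxend S n 1 j j' hj hllr'.1
    exact hne (by rw [Prod.mk.injEq]; omega)
end

section
/- The useful LLRs have strictly increasing start and ending positions: if S[a..b] and S[c..d] are two distinct useful LLRs with a < c, then b < d. Consequently no two useful LLRs share a start position or an ending position. -/
variable {α : Type*}

theorem stmt10 [Fintype α] (S : ℕ → α) (n a b c d : ℕ)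
    (h1 : IsUsefulLLR S n a b) (h2 : IsUsefulLLR S n c d) :
    (a < c → b < d) ∧ ((a, b) ≠ (c, d) → a ≠ c ∧ b ≠ d) := by
  have key : a < c → b < d := by
    intro hac
    by_contra hbd
    push_neg at hbd
    exact h2.2 ⟨a, b, h1.1, by simp [Prod.ext_iff]; omega, le_of_lt hac, hbd⟩
  have key2 : c < a → d < b := by
    intro hca
    by_contra hdb
    push_neg at hdb
    exact h1.2 ⟨c, d, h2.1, by simp [Prod.ext_iff]; omega, le_of_lt hca, hdb⟩
  refine ⟨key, fun hne => ?_⟩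
  constructor
  · intro hac
    subst hac
    rcases lt_trichotomy b d with h | h | h
    · exact h1.2 ⟨a, d, h2.1, by simp [Prod.ext_iff]; omega, le_refl _, le_of_lt h⟩
    · exact hne (by simp [h])
    · exact h2.2 ⟨a, b, h1.1, by simp [Prod.ext_iff]; omega, le_refl _, le_of_lt h⟩
  · intro hbd
    rcases lt_trichotomy a c with h | h | h
    · exact absurd (key h) (by omega)
    · exact hne (by simp [h, hbd])
    · exact absurd (key2 h) (by omega)
end

section
/- For any interval [x..y] (1 ≤ x ≤ y ≤ n), a substring S[a..b] is a longest repeat covering [x..y] if and only if S[a..b] is a useful LLR with a ≤ x ≤ y ≤ b whose length b−a+1 is maximum among all useful LLRs S[a'..b'] with a' ≤ x ≤ y ≤ b'. In particular, LR_x^y does not exist exactly when no useful LLR covers [x..y]. -/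
variable {α : Type*}

lemma extend_to_llr' {S : ℕ → α} {n i : ℕ} :
    ∀ m j, n - j ≤ m → IsRepeat S n i j → ∃ j', j ≤ j' ∧ IsLLR S n i j' := by
  intro m
  induction m with
  | zero =>
    intro j hm hr
    have hj : j = n := by have := hr.1.2.2; omega
    exact ⟨j, le_refl j, hr, Or.inl hj⟩
  | succ m ih =>
    intro j hm hr
    by_cases hjn : j = n
    · exact ⟨j, le_refl j, hr, Or.inl hjn⟩
    · have hjlt : j < n := lt_of_le_of_ne hr.1.2.2 hjn
      by_cases hrep : IsRepeat S n i (j + 1)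
      · obtain ⟨j', hj', hllr⟩ := ih (j + 1) (by omega) hrep
        exact ⟨j', by omega, hllr⟩
      · have hv : ValidSub n i (j + 1) := ⟨hr.1.1, by have := hr.1.2.1; omega, by omega⟩
        exact ⟨j, le_refl j, hr, Or.inr ⟨hv, fun hex => hrep ⟨hv, hex⟩⟩⟩

lemma extend_to_llr {S : ℕ → α} {n i j : ℕ} (h : IsRepeat S n i j) :
    ∃ j', j ≤ j' ∧ IsLLR S n i j' :=
  extend_to_llr' n j (by omega) h

lemma llr_to_useful' {S : ℕ → α} {n : ℕ} :
    ∀ m k j, k + (n - j) ≤ m → IsLLR S n k j →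
      ∃ k' j', IsUsefulLLR S n k' j' ∧ k' ≤ k ∧ j ≤ j' := by
  intro m
  induction m with
  | zero =>
    intro k j hm h
    exact absurd hm (by have := h.1.1.1; omega)
  | succ m ih =>
    intro k j hm h
    by_cases hu : ∃ k' j', IsLLR S n k' j' ∧ (k', j') ≠ (k, j) ∧ k' ≤ k ∧ j ≤ j'
    · obtain ⟨k', j', hllr, hne, hk, hj⟩ := hu
      have hj'n : j' ≤ n := hllr.1.1.2.2
      have hne' : k' ≠ k ∨ j' ≠ j := by
        by_contra hc
        push_neg at hc
        exact hne (by simp [hc.1, hc.2])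
      have hm' : k' + (n - j') ≤ m := by omega
      obtain ⟨a, b, hab, ha, hb⟩ := ih k' j' hm' hllr
      exact ⟨a, b, hab, le_trans ha hk, le_trans hj hb⟩
    · exact ⟨k, j, ⟨h, hu⟩, le_refl k, le_refl j⟩

lemma repeat_to_useful {S : ℕ → α} {n i j : ℕ} (h : IsRepeat S n i j) :
    ∃ a b, IsUsefulLLR S n a b ∧ a ≤ i ∧ j ≤ b := by
  obtain ⟨j', hj', hllr⟩ := extend_to_llr h
  obtain ⟨a, b, hab, ha, hb⟩ := llr_to_useful' (i + (n - j')) i j' (le_refl _) hllr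
  exact ⟨a, b, hab, ha, le_trans hj' hb⟩

lemma exists_lr {S : ℕ → α} {n x y : ℕ}
    (h : ∃ i j, IsRepeat S n i j ∧ i ≤ x ∧ y ≤ j) :
    ∃ a b, IsLR S n x y a b := by
  classical
  set P : ℕ → Prop := fun L => ∃ i j, IsRepeat S n i j ∧ i ≤ x ∧ y ≤ j ∧ j - i = L with hP
  obtain ⟨i0, j0, h0, hx0, hy0⟩ := h
  have hP0 : P (j0 - i0) := ⟨i0, j0, h0, hx0, hy0, rfl⟩
  have hbdd : ∀ L, P L → L ≤ n := by
    rintro L ⟨i, j, hr, _, _, rfl⟩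
    have := hr.1.2.2; omega
  have hPM : P (Nat.findGreatest P n) :=
    Nat.findGreatest_spec (hbdd _ hP0) hP0
  obtain ⟨a, b, hr, hax, hyb, hab⟩ := hPM
  refine ⟨a, b, hr, hax, hyb, ?_⟩
  rintro ⟨i', j', hr', hi', hj', hlt⟩
  have hle : j' - i' ≤ Nat.findGreatest P n :=
    Nat.le_findGreatest (hbdd _ ⟨i', j', hr', hi', hj', rfl⟩) ⟨i', j', hr', hi', hj', rfl⟩
  omega

theorem stmt11 [Fintype α] (S : ℕ → α) (n x y : ℕ)
    (hx : 1 ≤ x) (hxy : x ≤ y) (hyn : y ≤ n) :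
    (∀ a b, IsLR S n x y a b ↔
      (IsUsefulLLR S n a b ∧ a ≤ x ∧ y ≤ b ∧
        ∀ a' b', IsUsefulLLR S n a' b' → a' ≤ x → y ≤ b' →
          b' - a' + 1 ≤ b - a + 1)) ∧
    ((¬ ∃ a b, IsLR S n x y a b) ↔
      ¬ ∃ a b, IsUsefulLLR S n a b ∧ a ≤ x ∧ y ≤ b) := by
  have main : ∀ a b, IsLR S n x y a b ↔
      (IsUsefulLLR S n a b ∧ a ≤ x ∧ y ≤ b ∧
        ∀ a' b', IsUsefulLLR S n a' b' → a' ≤ x → y ≤ b' →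
          b' - a' + 1 ≤ b - a + 1) := by
    intro a b
    constructor
    · rintro ⟨hr, hax, hyb, hmax⟩
      have hab : a ≤ b := hr.1.2.1
      have hbn : b ≤ n := hr.1.2.2
      have hllr : IsLLR S n a b := by
        refine ⟨hr, ?_⟩
        by_cases hb : b = n
        · exact Or.inl hb
        · refine Or.inr ⟨⟨hr.1.1, by omega, by omega⟩, fun hex => ?_⟩
          exact hmax ⟨a, b + 1, ⟨⟨hr.1.1, by omega, by omega⟩, hex⟩,
            hax, by omega, by omega⟩
      refine ⟨⟨hllr, ?_⟩, hax, hyb, ?_⟩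
      · rintro ⟨k', j', hllr', hne, hk', hj'⟩
        have hne' : k' ≠ a ∨ j' ≠ b := by
          by_contra hc
          push_neg at hc
          exact hne (by simp [hc.1, hc.2])
        exact hmax ⟨k', j', hllr'.1, le_trans hk' hax, le_trans hyb hj', by omega⟩
      · intro a' b' hu' ha' hb'
        by_contra hc
        exact hmax ⟨a', b', hu'.1.1, ha', hb', by omega⟩
    · rintro ⟨hu, hax, hyb, hmax⟩
      refine ⟨hu.1.1, hax, hyb, ?_⟩
      rintro ⟨i', j', hr', hi', hj', hlt⟩
      obtain ⟨k, jj, hukj, hk, hjj⟩ := repeat_to_useful hr'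
      have := hmax k jj hukj (le_trans hk hi') (le_trans hj' hjj)
      have hij : i' ≤ j' := hr'.1.2.1
      omega
  refine ⟨main, ?_⟩
  constructor
  · intro hno
    rintro ⟨a, b, hu, hax, hyb⟩
    exact hno (exists_lr ⟨a, b, hu.1.1, hax, hyb⟩)
  · intro hno
    rintro ⟨a, b, hlr⟩
    obtain ⟨k, jj, huk, hk, hjj⟩ := repeat_to_useful hlr.1
    exact hno ⟨k, jj, huk, le_trans hk hlr.2.1, le_trans hlr.2.2.1 hjj⟩
end
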